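/- arXiv:2004.11111 — 4 statements merged into one kernel-verified Lean document; each statement's English description precedes it below -/
import Mathlib

section
/- Let χ : ℝ → ℝ be convex, monotone increasing, and continuously differentiable. Let t < 0 and c ≥ 0 be real numbers with t + c < 0. Then χ(t + c) − χ(t) ≤ (χ(0) − χ(t)) · (log(−t) − log(−(t + c))). -/
/-!
For `r ∈ [t, t + c]` the right derivative of `χ` at `r` is at most the slope of the chord from `r`
to `0`, which by monotonicity is at most `(χ 0 - χ t) / (-r)`. Integrating this bound over
`[t, t + c]` gives the factor `∫ dr / (-r) = log (-t) - log (-(t + c))`.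
-/

open Set Real intervalIntegral

theorem integral_inv_sub_left {a s b : ℝ} (ha : a < b) (hs : s < b) :
    ∫ r in a..s, (b - r)⁻¹ = log (b - a) - log (b - s) := by
  rw [integral_comp_sub_left (fun r => r⁻¹), integral_inv_of_pos (sub_pos.2 hs) (sub_pos.2 ha),
    log_div (sub_pos.2 ha).ne' (sub_pos.2 hs).ne']

theorem ConvexOn.rightDeriv_le_div_of_le {S : Set ℝ} {f : ℝ → ℝ} (hf : ConvexOn ℝ S f)
    {a r b : ℝ} (hr : r ∈ interior S) (hb : b ∈ S) (hrb : r < b) (hfar : f a ≤ f r) :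
    derivWithin f (Ioi r) r ≤ (f b - f a) / (b - r) :=
  calc derivWithin f (Ioi r) r ≤ slope f r b := hf.rightDeriv_le_slope_of_mem_interior hr hb hrb
    _ = (f b - f r) / (b - r) := slope_def_field f r b
    _ ≤ (f b - f a) / (b - r) := by gcongr

theorem ConvexOn.sub_le_mul_log_sub_of_monotone {f : ℝ → ℝ} (hf : ConvexOn ℝ univ f)
    (hmono : Monotone f) {a s b : ℝ} (has : a ≤ s) (hsb : s < b) :
    f s - f a ≤ (f b - f a) * (log (b - a) - log (b - s)) := by
  have hab : a < b := has.trans_lt hsb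
  have hbound : ContinuousOn (fun r => (f b - f a) * (b - r)⁻¹) (Icc a s) :=
    continuousOn_const.mul <| (continuousOn_const.sub continuousOn_id).inv₀ fun r hr =>
      (sub_pos.2 (hr.2.trans_lt hsb)).ne'
  calc f s - f a ≤ ∫ r in a..s, (f b - f a) * (b - r)⁻¹ := by
        refine sub_le_integral_of_hasDeriv_right_of_le has
          ((hf.continuousOn isOpen_univ).mono (subset_univ _))
          (fun r _ => hf.hasDerivWithinAt_rightDeriv_of_mem_interior (by simp))
          (hbound.integrableOn_compact isCompact_Icc) fun r hr => ?_
        rw [← div_eq_mul_inv]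
        exact hf.rightDeriv_le_div_of_le (by simp) (mem_univ b) (hr.2.trans hsb)
          (hmono hr.1.le)
    _ = (f b - f a) * (log (b - a) - log (b - s)) := by
        rw [integral_const_mul, integral_inv_sub_left hab hsb]

theorem convex_weight_log_estimate_general (χ : ℝ → ℝ)
    (hχ_conv : ConvexOn ℝ Set.univ χ)
    (hχ_mono : Monotone χ)
    (t c : ℝ) (hc : 0 ≤ c) (htc : t + c < 0) :
    χ (t + c) - χ t ≤ (χ 0 - χ t) * (Real.log (-t) - Real.log (-(t + c))) := by
  simpa only [zero_sub] using
    hχ_conv.sub_le_mul_log_sub_of_monotone hχ_mono (le_add_of_nonneg_right hc) htc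

/-- Key integral estimate in the proof of Lemma 5.4: for a `C¹` convex increasing
function `χ`, real numbers `t < 0`, `c ≥ 0` with `t + c < 0`, one has
`χ (t + c) - χ t ≤ (χ 0 - χ t) * (log (-t) - log (-(t + c)))`. -/
theorem convex_weight_log_estimate (χ : ℝ → ℝ)
    (hχ_conv : ConvexOn ℝ Set.univ χ)
    (hχ_mono : Monotone χ)
    (hχ_C1 : ContDiff ℝ 1 χ)
    (t c : ℝ) (ht : t < 0) (hc : 0 ≤ c) (htc : t + c < 0) :
    χ (t + c) - χ t ≤ (χ 0 - χ t) * (Real.log (-t) - Real.log (-(t + c))) :=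
  convex_weight_log_estimate_general χ hχ_conv hχ_mono t c hc htc
end

section
/- Let χ : ℝ → ℝ be convex, monotone increasing, and such that χ(t) → −∞ as t → −∞. Then for every c ∈ ℝ there exist constants M > 0, c₁ > 0 and c₂ > 0 such that χ(t + c) ≥ c₁ · χ(t) − c₂ for all t < −M. -/
open Filter

/-- Final assertion of Lemma 5.4: every convex weight `χ` (convex, increasing,
`χ(t) → -∞` as `t → -∞`) satisfies the growth condition (5.1): for every `c` there are
constants `M, c₁, c₂ > 0` with `χ (t + c) ≥ c₁ * χ t - c₂` for all `t < -M`. -/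
theorem convex_weight_growth (χ : ℝ → ℝ)
    (hχ_conv : ConvexOn ℝ Set.univ χ)
    (hχ_mono : Monotone χ)
    (hχ_bot : Tendsto χ atBot atBot) :
    ∀ c : ℝ, ∃ M > (0 : ℝ), ∃ c₁ > (0 : ℝ), ∃ c₂ > (0 : ℝ),
      ∀ t < -M, c₁ * χ t - c₂ ≤ χ (t + c) := by
  intro c
  obtain ⟨T, hT⟩ := Filter.eventually_atBot.mp (hχ_bot.eventually (eventually_le_atBot (-1)))
  refine ⟨max (2 * |c|) (-T) + 1, by positivity, 3/2, by norm_num, |χ 0| + 1, by positivity, ?_⟩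
  intro t ht
  have habs : |c| ≥ 0 := abs_nonneg c
  have ht0 : t < 0 := by
    have := le_max_left (2 * |c|) (-T)
    linarith
  have htT : t ≤ T := by
    have := le_max_right (2 * |c|) (-T)
    linarith
  have hχt : χ t ≤ -1 := hT t htT
  have hχt0 : χ t ≤ χ 0 := hχ_mono (le_of_lt ht0)
  have ht2c : t < -(2 * |c|) - 1 := by
    have := le_max_left (2 * |c|) (-T)
    linarith
  rcases le_or_gt 0 c with hc | hc
  · -- c ≥ 0 : χ (t + c) ≥ χ t
    have h1 : χ t ≤ χ (t + c) := hχ_mono (by linarith)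
    have := abs_nonneg (χ 0)
    linarith
  · -- c < 0 : use the slope inequality with t + c < t < 0
    have hslope := hχ_conv.slope_mono_adjacent (Set.mem_univ (t + c)) (Set.mem_univ (0 : ℝ))
      (show t + c < t by linarith) ht0
    have hden1 : (0 : ℝ) < t - (t + c) := by linarith
    have hden2 : (0 : ℝ) < 0 - t := by linarith
    have hkey : (χ t - χ (t + c)) * (0 - t) ≤ (χ 0 - χ t) * (t - (t + c)) :=
      (div_le_div_iff₀ hden1 hden2).mp hslope
    have habs1 : χ 0 ≤ |χ 0| := le_abs_self (χ 0)
    have habs2 : -(χ 0) ≤ |χ 0| := neg_le_abs (χ 0)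
    have hcabs : |c| = -c := abs_of_neg hc
    rw [hcabs] at ht2c
    -- now t < 2*c - 1, i.e. -t > -2c + 1 > 0
    nlinarith [mul_nonneg (by linarith : (0:ℝ) ≤ -t - 2 * (-c)) (by linarith : (0:ℝ) ≤ -1 - χ t),
      mul_nonneg (by linarith : (0:ℝ) ≤ -t - 2 * (-c)) (by linarith : (0:ℝ) ≤ |χ 0|),
      mul_nonneg (by linarith : (0:ℝ) ≤ -c) (by linarith : (0:ℝ) ≤ |χ 0| - χ 0)]
end

section
/- Let U be an open subset of ℂⁿ, let K ⊆ U be compact, let (μ_l)_{l∈ℕ} be a family of outer measures on U, let (u_k)_{k∈ℕ} be a sequence of continuous functions u_k : U → ℝ decreasing pointwise to a function u : U → ℝ. Assume that for every δ > 0, sup_l μ_l({x ∈ K : u_k(x) − u(x) ≥ δ}) → 0 as k → ∞. Then for every ε > 0 there exists a subset S ⊆ K such that μ_l(K \ S) ≤ ε for every l, and the restriction of u to S is continuous. -/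
open MeasureTheory Filter Topology

/-! Choose `k_j` so that the sets where `u_{k_j} - v ≥ 1/(j+1)` have outer measure at most
`ε_j`, uniformly in `l`, with `∑ ε_j ≤ ε`. Off their union `v ≤ u_{k_j} < v + 1/(j+1)`, so
there `v` is a uniform limit of continuous functions. -/

theorem tendstoUniformlyOn_of_dist_le {α β ι : Type*} [PseudoMetricSpace β]
    {p : Filter ι} {F : ι → α → β} {f : α → β} {s : Set α} {δ : ι → ℝ}
    (hδ : Tendsto δ p (𝓝 0))
    (hdist : ∀ i, ∀ x ∈ s, dist (f x) (F i x) ≤ δ i) : TendstoUniformlyOn F f p s := by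
  rw [Metric.tendstoUniformlyOn_iff]
  intro ε hε
  filter_upwards [hδ.eventually (gt_mem_nhds hε)] with i hi x hx
  exact (hdist i x hx).trans_lt hi

theorem OuterMeasure.exists_seq_forall_iUnion_le {X ι : Type*}
    (μ : ι → OuterMeasure X) {A : ℕ → ℕ → Set X}
    (hA : ∀ j, Tendsto (fun k => ⨆ l, μ l (A j k)) atTop (𝓝 0))
    {ε : ENNReal} (hε : ε ≠ 0) : ∃ φ : ℕ → ℕ, ∀ l, μ l (⋃ j, A j (φ j)) ≤ ε := by
  obtain ⟨η, hη_pos, hη_sum⟩ := ENNReal.exists_pos_sum_of_countable' hε ℕ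
  have hsmall : ∀ j, ∃ k, ⨆ l, μ l (A j k) ≤ η j := fun j =>
    ((hA j).eventually (gt_mem_nhds (hη_pos j))).exists.imp fun _ hk => hk.le
  choose φ hφ using hsmall
  refine ⟨φ, fun l => ?_⟩
  calc μ l (⋃ j, A j (φ j)) ≤ ∑' j, μ l (A j (φ j)) := measure_iUnion_le _
    _ ≤ ∑' j, η j := ENNReal.tsum_le_tsum fun j =>
        (le_iSup (fun l => μ l (A j (φ j))) l).trans (hφ j)
    _ ≤ ε := hη_sum.le

theorem egorov_uniform_outer_measure_general (n : ℕ) (U : Set (Fin n → ℂ))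
    (K : Set (Fin n → ℂ)) (hKU : K ⊆ U)
    (μ : ℕ → OuterMeasure (Fin n → ℂ))
    (u : ℕ → (Fin n → ℂ) → ℝ) (v : (Fin n → ℂ) → ℝ)
    (hu_cont : ∀ k, ContinuousOn (u k) U)
    (hu_anti : ∀ x ∈ U, Antitone (fun k => u k x))
    (hu_lim : ∀ x ∈ U, Tendsto (fun k => u k x) atTop (nhds (v x)))
    (hcap : ∀ δ : ℝ, 0 < δ →
      Tendsto (fun k => ⨆ l, μ l {x ∈ K | δ ≤ u k x - v x}) atTop (nhds 0)) :
    ∀ ε : ENNReal, 0 < ε →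
      ∃ S ⊆ K, (∀ l, μ l (K \ S) ≤ ε) ∧ ContinuousOn v S := by
  intro ε hε
  set A : ℕ → ℕ → Set (Fin n → ℂ) := fun j k => {x ∈ K | 1 / (j + 1 : ℝ) ≤ u k x - v x}
  obtain ⟨φ, hφ⟩ := OuterMeasure.exists_seq_forall_iUnion_le μ (A := A)
    (fun j => hcap _ Nat.one_div_pos_of_nat) hε.ne'
  set S := K \ ⋃ j, A j (φ j)
  have hSU : S ⊆ U := Set.sdiff_subset.trans hKU
  refine ⟨S, Set.sdiff_subset, fun l => ?_, ?_⟩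
  · rw [Set.sdiff_sdiff_right_self]
    exact ((μ l).mono Set.inter_subset_right).trans (hφ l)
  · have hdist : ∀ j, ∀ x ∈ S, dist (v x) (u (φ j) x) ≤ 1 / (j + 1 : ℝ) := by
      intro j x hx
      have hvu : v x ≤ u (φ j) x := (hu_anti x (hSU hx)).le_of_tendsto (hu_lim x (hSU hx)) _
      have hlt : u (φ j) x - v x < 1 / (j + 1 : ℝ) :=
        not_le.1 fun h => hx.2 (Set.mem_iUnion.2 ⟨j, hx.1, h⟩)
      rw [dist_comm, Real.dist_eq, abs_of_nonneg (sub_nonneg.2 hvu)]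
      exact hlt.le
    have huniform := tendstoUniformlyOn_of_dist_le tendsto_one_div_add_atTop_nhds_zero_nat hdist
    exact huniform.continuousOn (Frequently.of_forall fun j => (hu_cont (φ j)).mono hSU)

/-- Egorov-type argument, uniform in a family of outer measures, used in the proof of
Theorem 2.3: if continuous functions `u k` decrease pointwise on `U` to `v`, and the
sets where `u k - v ≥ δ` on a compact `K ⊆ U` have outer measure tending to `0`
uniformly in the family, then off a set of uniformly small outer measure in `K` the
limit `v` is continuous. -/
theorem egorov_uniform_outer_measure (n : ℕ) (U : Set (Fin n → ℂ)) (hU : IsOpen U)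
    (K : Set (Fin n → ℂ)) (hK : IsCompact K) (hKU : K ⊆ U)
    (μ : ℕ → OuterMeasure (Fin n → ℂ))
    (u : ℕ → (Fin n → ℂ) → ℝ) (v : (Fin n → ℂ) → ℝ)
    (hu_cont : ∀ k, ContinuousOn (u k) U)
    (hu_anti : ∀ x ∈ U, Antitone (fun k => u k x))
    (hu_lim : ∀ x ∈ U, Tendsto (fun k => u k x) atTop (nhds (v x)))
    (hcap : ∀ δ : ℝ, 0 < δ →
      Tendsto (fun k => ⨆ l, μ l {x ∈ K | δ ≤ u k x - v x}) atTop (nhds 0)) :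
    ∀ ε : ENNReal, 0 < ε →
      ∃ S ⊆ K, (∀ l, μ l (K \ S) ≤ ε) ∧ ContinuousOn v S :=
  egorov_uniform_outer_measure_general n U K hKU μ u v hu_cont hu_anti hu_lim hcap
end

section
/- Let U be an open subset of ℂⁿ, let u : U → ℝ be a function, and let L be a family of outer measures on U. Assume that for every compact K ⊆ U and every δ > 0 there exists a compact subset S ⊆ K such that μ(K \ S) ≤ δ for every μ ∈ L, and the restriction of u to S is continuous. Then for every ε > 0 there exists an open subset U′ ⊆ U such that μ(U′) ≤ ε for every μ ∈ L, and the restriction of u to U \ U′ is continuous. -/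
/-!
Exhaust `U` by compact sets `K₀ ⊆ int K₁ ⊆ K₁ ⊆ …` and cut it into the compact shells
`K_{s+1} \ int K_s`. These shells form a locally finite cover, so choosing in the `s`-th shell a
compact `S_s` of defect at most `ε 2^{-s}` on which `u` is continuous, the union `⋃ S_s` is
closed, `u` is continuous on it by the pasting lemma, and its complement in `U` is covered by the
defects, whose total outer measure is at most `ε`. The argument runs in the subspace `U`, which
is locally compact and σ-compact, and the outer measures are pulled back to it.
-/

open MeasureTheory Set Topology

variable {X Z : Type*} [TopologicalSpace X] [TopologicalSpace Z]

def HasLusinPropertyOn (L : Set (OuterMeasure X)) (f : X → Z) (s : Set X) : Prop :=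
  ∀ K ⊆ s, IsCompact K → ∀ δ : ENNReal, 0 < δ →
    ∃ S ⊆ K, IsCompact S ∧ (∀ μ ∈ L, μ (K \ S) ≤ δ) ∧ ContinuousOn f S

namespace CompactExhaustion

variable (K : CompactExhaustion X)

def shell (n : ℕ) : Set X :=
  K (n + 1) \ interior (K n)

theorem isCompact_shell (n : ℕ) : IsCompact (K.shell n) :=
  (K.isCompact _).diff isOpen_interior

theorem locallyFinite_shell : LocallyFinite K.shell := by
  intro x
  obtain ⟨k, hk⟩ := K.exists_mem_nhds x
  exact ⟨K k, hk, (finite_Iic k).subset fun n ⟨y, hyn, hyk⟩ =>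
    not_lt.1 fun hkn => hyn.2 (K.subset_interior hkn hyk)⟩

theorem iUnion_shell_shiftr : ⋃ n, K.shiftr.shell n = univ :=
  iUnion_eq_univ_iff.2 fun x =>
    ⟨K.find x, sdiff_subset_sdiff_right interior_subset (K.mem_sdiff_shiftr_find x)⟩

end CompactExhaustion

theorem HasLusinPropertyOn.exists_isClosed_continuousOn [T2Space X]
    [WeaklyLocallyCompactSpace X] [SigmaCompactSpace X] {L : Set (OuterMeasure X)} {f : X → Z}
    (hf : HasLusinPropertyOn L f univ) {ε : ENNReal} (hε : 0 < ε) :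
    ∃ C, IsClosed C ∧ (∀ μ ∈ L, μ Cᶜ ≤ ε) ∧ ContinuousOn f C := by
  obtain ⟨δ, hδ, hδε⟩ := ENNReal.exists_pos_sum_of_countable' hε.ne' ℕ
  set K := (CompactExhaustion.choice X).shiftr
  choose S hSK hS hSμ hSf using
    fun n => hf (K.shell n) (subset_univ _) (K.isCompact_shell n) (δ n) (hδ n)
  have hSlf : LocallyFinite S := K.locallyFinite_shell.subset hSK
  have hSclosed : ∀ n, IsClosed (S n) := fun n => (hS n).isClosed
  have hcompl : (⋃ n, S n)ᶜ ⊆ ⋃ n, K.shell n \ S n := fun x hx =>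
    have ⟨n, hn⟩ := iUnion_eq_univ_iff.1 (CompactExhaustion.iUnion_shell_shiftr _) x
    mem_iUnion.2 ⟨n, hn, fun hxS => hx (mem_iUnion.2 ⟨n, hxS⟩)⟩
  refine ⟨⋃ n, S n, hSlf.isClosed_iUnion hSclosed, fun μ hμ => ?_,
    hSlf.continuousOn_iUnion hSclosed hSf⟩
  calc μ (⋃ n, S n)ᶜ ≤ μ (⋃ n, K.shell n \ S n) := measure_mono hcompl
    _ ≤ ∑' n, μ (K.shell n \ S n) := measure_iUnion_le _
    _ ≤ ∑' n, δ n := ENNReal.tsum_le_tsum fun n => hSμ n μ hμ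
    _ ≤ ε := hδε.le

theorem HasLusinPropertyOn.subtype {L : Set (OuterMeasure X)} {f : X → Z} {s : Set X}
    (hf : HasLusinPropertyOn L f s) :
    HasLusinPropertyOn (OuterMeasure.comap (↑) '' L) (f ∘ ((↑) : s → X)) univ := by
  intro K _ hK δ hδ
  obtain ⟨S, hSK, hS, hSμ, hSf⟩ := hf (↑K) (Subtype.coe_image_subset s K)
    (hK.image continuous_subtype_val) δ hδ
  have hS_range : S ⊆ range ((↑) : s → X) := hSK.trans (image_subset_range _ _)
  refine ⟨(↑) ⁻¹' S, (preimage_mono hSK).trans (preimage_image_eq K Subtype.val_injective).le,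
    Subtype.isCompact_iff.2 (by rwa [image_preimage_eq_of_subset hS_range]), ?_,
    hSf.comp continuous_subtype_val.continuousOn (mapsTo_preimage _ _)⟩
  rintro _ ⟨μ, hμ, rfl⟩
  rw [OuterMeasure.comap_apply, image_sdiff_preimage]
  exact hSμ μ hμ

/-- Gluing (exhaustion) argument proving the quasi-continuity conclusion of Theorem 2.3,
uniform in a family `L` of outer measures: if on every compact `K ⊆ U` the function `u`
is continuous off a compact subset of uniformly small outer measure, then for every
`ε > 0` there is an open `U' ⊆ U` with `μ U' ≤ ε` for all `μ ∈ L` such that `u`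
restricted to `U \ U'` is continuous. -/
theorem quasicontinuity_gluing (n : ℕ) (U : Set (Fin n → ℂ)) (hU : IsOpen U)
    (u : (Fin n → ℂ) → ℝ)
    (L : Set (OuterMeasure (Fin n → ℂ)))
    (h : ∀ K ⊆ U, IsCompact K → ∀ δ : ENNReal, 0 < δ →
      ∃ S ⊆ K, IsCompact S ∧ (∀ μ ∈ L, μ (K \ S) ≤ δ) ∧ ContinuousOn u S) :
    ∀ ε : ENNReal, 0 < ε →
      ∃ U' ⊆ U, IsOpen U' ∧ (∀ μ ∈ L, μ U' ≤ ε) ∧ ContinuousOn u (U \ U') := by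
  intro ε hε
  have : LocallyCompactSpace U := hU.locallyCompactSpace
  obtain ⟨C, hC, hCμ, hCu⟩ :=
    (show HasLusinPropertyOn L u U from h).subtype.exists_isClosed_continuousOn hε
  refine ⟨(↑) '' Cᶜ, Subtype.coe_image_subset U _, hU.isOpenMap_subtype_val _ hC.isOpen_compl,
    fun μ hμ => OuterMeasure.comap_apply _ μ _ ▸ hCμ _ (mem_image_of_mem _ hμ), ?_⟩
  rw [Set.image_val_compl, sdiff_sdiff_cancel_left (Subtype.coe_image_subset U C)]
  exact IsInducing.subtypeVal.continuousOn_image_iff.2 hCu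
end
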